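/- For every k ≥ 1, the porous exponential domination number satisfies γ*_e(G_{k+1}) ≤ 3·γ*_e(G_k), where G_k denotes the k-th Apollonian network. -/

import Mathlib

/-- A family of Apollonian networks, given by a vertex set `Vert` together with a
generation labeling `gen` and an adjacency relation `adj`, satisfying the recursive
construction: the first generation `U₁` consists of three pairwise adjacent vertices
(forming `G₁`); and for each `k ≥ 1`, for each vertex `u` of generation `k` and each
adjacent pair `{x, y}` of neighbors of `u` in `G_k`, exactly one new vertex of
generation `k + 1` is created, adjacent to exactly `u`, `x`, and `y`.
The `k`-th Apollonian network `G_k` is the induced subgraph on the vertices of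
generation at most `k`. -/
structure ApollonianNetwork where
  Vert : Type
  adj : Vert → Vert → Prop
  adj_symm : ∀ a b, adj a b → adj b a
  adj_irrefl : ∀ a, ¬ adj a a
  gen : Vert → ℕ
  gen_pos : ∀ v, 1 ≤ gen v
  /-- The first generation consists of exactly three vertices. -/
  U1_card : ∃ a b c : Vert, a ≠ b ∧ a ≠ c ∧ b ≠ c ∧ {v | gen v = 1} = {a, b, c}
  /-- `G₁` is a complete graph on the first generation. -/
  U1_complete : ∀ a b, gen a = 1 → gen b = 1 → a ≠ b → adj a b
  /-- All edges join vertices of distinct generations, except within generation 1. -/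
  adj_gen : ∀ a b, adj a b → gen a = gen b → gen a = 1
  /-- Every vertex `v` of generation `k ≥ 2` is adjacent, among the vertices of earlier
  generations, to exactly three vertices `u`, `x`, `y`, where `u` has generation `k - 1`
  and `x`, `y` are neighbors of `u` in `G_{k-1}` that are adjacent to each other. -/
  created : ∀ v, 2 ≤ gen v → ∃ u x y,
    gen u = gen v - 1 ∧ gen x ≤ gen v - 1 ∧ gen y ≤ gen v - 1 ∧
    adj u x ∧ adj u y ∧ adj x y ∧
    {w | adj v w ∧ gen w < gen v} = {u, x, y}
  /-- For each `k ≥ 1`, each vertex `u` of generation `k`, and each adjacent pair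
  `{x, y}` of neighbors of `u` in `G_k`, there is exactly one vertex of generation
  `k + 1` whose neighbors in `G_{k+1}` are exactly `u`, `x`, and `y`. -/
  attach : ∀ k, 1 ≤ k → ∀ u x y,
    gen u = k → gen x ≤ k → gen y ≤ k → x ≠ y →
    adj u x → adj u y → adj x y →
    ∃! v, gen v = k + 1 ∧ {w | adj v w ∧ gen w ≤ k} = ({u, x, y} : Set Vert)

/-- The `k`-th Apollonian network `G_k`: the induced subgraph on the vertices of
generation at most `k`. -/
def ApollonianNetwork.G (A : ApollonianNetwork) (k : ℕ) :
    SimpleGraph {v : A.Vert // A.gen v ≤ k} where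
  Adj a b := A.adj a b
  symm := ⟨fun a b h => A.adj_symm a b h⟩
  loopless := ⟨fun a h => A.adj_irrefl a h⟩

open Classical in
/-- The porous exponential domination weight of a set `S` at a vertex `v`:
`∑_{u ∈ S} 1 / 2 ^ (d(u, v) - 1)`, where vertices at infinite distance from `v`
contribute `0`.  (Note `2 * (1/2) ^ d = 1 / 2 ^ (d - 1)` including for `d = 0`.) -/
noncomputable def expWeight {V : Type*} (G : SimpleGraph V) (S : Finset V) (v : V) : ℝ :=
  ∑ u ∈ S, if G.Reachable u v then 2 * (2 : ℝ)⁻¹ ^ G.dist u v else 0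

/-- `S` is a porous exponential dominating set for `G` if every vertex receives
total weight at least 1. -/
def IsPorousExpDomSet {V : Type*} (G : SimpleGraph V) (S : Finset V) : Prop :=
  ∀ v, 1 ≤ expWeight G S v

/-- The porous exponential domination number `γ*ₑ(G)`: the smallest cardinality of a
porous exponential dominating set for `G` (`⊤` if there is none). -/
noncomputable def porousExpDomNum {V : Type*} (G : SimpleGraph V) : ℕ∞ :=
  sInf {n : ℕ∞ | ∃ S : Finset V, IsPorousExpDomSet G S ∧ (S.card : ℕ∞) = n}

/-!
Each corner `r` of `G₁` gives an injective graph homomorphism `G_k → G_{k+1}`: it sends `r` to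
the apex (the unique vertex of generation 2), fixes the other two corners, and sends every later
vertex to the vertex born from the image of its parent triangle. The images of the three
homomorphisms cover `G_{k+1}`, which is the union of the three copies of `G_k` spanned by the
apex and two corners. Homomorphisms do not increase distances, so the union of the three images
of a porous exponential dominating set of `G_k` dominates `G_{k+1}`.
-/

lemma SimpleGraph.dist_map_le {V W : Type*} {G : SimpleGraph V} {H : SimpleGraph W}
    (f : G →g H) {u v : V} (h : G.Reachable u v) : H.dist (f u) (f v) ≤ G.dist u v := by
  obtain ⟨p, hp⟩ := h.exists_walk_length_eq_dist
  rw [← hp, ← p.length_map f]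
  exact SimpleGraph.dist_le _

section PorousExpDomination

variable {V W : Type*} {G : SimpleGraph V} {H : SimpleGraph W}

lemma expWeight_mono {S T : Finset V} (hST : S ⊆ T) (v : V) :
    expWeight G S v ≤ expWeight G T v :=
  Finset.sum_le_sum_of_subset_of_nonneg hST fun _ _ _ => by split_ifs <;> positivity

lemma expWeight_le_expWeight_map (f : G →g H) (hf : Function.Injective f) (S : Finset V)
    (v : V) : expWeight G S v ≤ expWeight H (S.map ⟨f, hf⟩) (f v) := by
  rw [expWeight, expWeight, Finset.sum_map]
  refine Finset.sum_le_sum fun s _ => ?_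
  split_ifs with hG hH hH
  · gcongr 2 * ?_
    exact pow_le_pow_of_le_one (by norm_num) (by norm_num) (SimpleGraph.dist_map_le f hG)
  · exact absurd (hG.map f) hH
  · positivity
  · exact le_rfl

lemma porousExpDomNum_le_card {S : Finset V} (hS : IsPorousExpDomSet G S) :
    porousExpDomNum G ≤ S.card :=
  sInf_le ⟨S, hS, rfl⟩

lemma exists_isPorousExpDomSet_card_eq (h : porousExpDomNum G ≠ ⊤) :
    ∃ S, IsPorousExpDomSet G S ∧ (S.card : ℕ∞) = porousExpDomNum G := by
  have hne :
      {n : ℕ∞ | ∃ S : Finset V, IsPorousExpDomSet G S ∧ (S.card : ℕ∞) = n}.Nonempty :=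
    Set.nonempty_iff_ne_empty.2 fun hempty => h (by rw [porousExpDomNum, hempty, sInf_empty])
  exact csInf_mem hne

theorem porousExpDomNum_le_natCard_mul {ι : Type*} [Finite ι] (f : ι → G →g H)
    (hf : ∀ i, Function.Injective (f i)) (hcover : ∀ w, ∃ i v, f i v = w) :
    porousExpDomNum H ≤ Nat.card ι * porousExpDomNum G := by
  classical
  rcases isEmpty_or_nonempty ι with hι | hι
  · have : IsEmpty W := ⟨fun w => by obtain ⟨i, -⟩ := hcover w; exact isEmptyElim i⟩
    simpa using porousExpDomNum_le_card (S := ∅) (fun w : W => isEmptyElim w)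
  by_cases htop : porousExpDomNum G = ⊤
  · rw [htop, ENat.mul_top (by simp [Nat.card_pos.ne'])]
    exact le_top
  obtain ⟨S, hS, hcard⟩ := exists_isPorousExpDomSet_card_eq htop
  have := Fintype.ofFinite ι
  let T := Finset.univ.biUnion fun i => S.map ⟨f i, hf i⟩
  have hT : IsPorousExpDomSet H T := fun w => by
    obtain ⟨i, v, rfl⟩ := hcover w
    calc 1 ≤ expWeight G S v := hS v
      _ ≤ expWeight H (S.map ⟨f i, hf i⟩) (f i v) := expWeight_le_expWeight_map _ _ _ _
      _ ≤ expWeight H T (f i v) :=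
        expWeight_mono (Finset.subset_biUnion_of_mem (fun j => S.map ⟨f j, hf j⟩)
          (Finset.mem_univ i)) _
  have hTcard : T.card ≤ Nat.card ι * S.card := by
    rw [Nat.card_eq_fintype_card, ← Finset.card_univ]
    exact Finset.card_biUnion_le_card_mul _ _ _ fun i _ => (Finset.card_map _).le
  calc porousExpDomNum H ≤ T.card := porousExpDomNum_le_card hT
    _ ≤ (Nat.card ι * S.card : ℕ) := by exact_mod_cast hTcard
    _ = Nat.card ι * porousExpDomNum G := by rw [← hcard]; push_cast; rfl

end PorousExpDomination

namespace ApollonianNetwork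

variable (A : ApollonianNetwork)

def parents (v : A.Vert) : Set A.Vert := {t | A.adj v t ∧ A.gen t < A.gen v}

variable {A}

lemma ne_of_adj {a b : A.Vert} (h : A.adj a b) : a ≠ b := by
  rintro rfl
  exact A.adj_irrefl a h

lemma gen_lt_of_adj {a b : A.Vert} (h : A.adj a b) (hle : A.gen b ≤ A.gen a)
    (ha : 2 ≤ A.gen a) : A.gen b < A.gen a := by
  have := A.adj_gen b a (A.adj_symm a b h)
  omega

lemma setOf_adj_gen_le_eq_parents {v : A.Vert} {k : ℕ} (hv : A.gen v = k + 1) :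
    {t | A.adj v t ∧ A.gen t ≤ k} = A.parents v := by
  ext t
  exact and_congr_right fun _ => by omega

lemma exists_parents_eq_triangle {v : A.Vert} (hv : 2 ≤ A.gen v) :
    ∃ u x y, A.gen u + 1 = A.gen v ∧ A.adj u x ∧ A.adj u y ∧ A.adj x y ∧
      A.parents v = {u, x, y} := by
  obtain ⟨u, x, y, hu, -, -, hux, huy, hxy, hpar⟩ := A.created v hv
  exact ⟨u, x, y, by omega, hux, huy, hxy, hpar⟩

lemma adj_of_mem_parents {v s t : A.Vert} (hs : s ∈ A.parents v) (ht : t ∈ A.parents v)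
    (hst : s ≠ t) : A.adj s t := by
  have hv : 2 ≤ A.gen v := by have := A.gen_pos s; have := hs.2; omega
  obtain ⟨u, x, y, -, hux, huy, hxy, hpar⟩ := exists_parents_eq_triangle hv
  have symm := A.adj_symm
  rw [hpar] at hs ht
  rcases hs with rfl | rfl | rfl <;> rcases ht with rfl | rfl | rfl <;> tauto

lemma exists_parents_eq {k : ℕ} (hk : 1 ≤ k) {a b c : A.Vert} (hab : A.adj a b)
    (hac : A.adj a c) (hbc : A.adj b c) (ha : A.gen a ≤ k) (hb : A.gen b ≤ k)
    (hc : A.gen c ≤ k) (hmax : A.gen a = k ∨ A.gen b = k ∨ A.gen c = k) :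
    ∃ w, A.gen w = k + 1 ∧ A.parents w = {a, b, c} := by
  have symm := A.adj_symm
  suffices ∀ u x y, A.gen u = k → A.gen x ≤ k → A.gen y ≤ k →
      A.adj u x → A.adj u y → A.adj x y →
      ∃ w, A.gen w = k + 1 ∧ A.parents w = {u, x, y} by
    rcases hmax with h | h | h
    · exact this a b c h hb hc hab hac hbc
    · simpa only [Set.insert_comm] using this b a c h ha hc (symm _ _ hab) hbc hac
    · obtain ⟨w, hw, hpar⟩ := this c a b h ha hb (symm _ _ hac) (symm _ _ hbc) hab
      exact ⟨w, hw, by rw [hpar, Set.insert_comm, Set.pair_comm]⟩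
  intro u x y hu hx hy hux huy hxy
  obtain ⟨w, ⟨hw, hpar⟩, -⟩ := A.attach k hk u x y hu hx hy (ne_of_adj hxy) hux huy hxy
  exact ⟨w, hw, (setOf_adj_gen_le_eq_parents hw).symm.trans hpar⟩

lemma eq_of_parents_eq {v w : A.Vert} (hv : 2 ≤ A.gen v) (hgen : A.gen v = A.gen w)
    (hpar : A.parents v = A.parents w) : v = w := by
  obtain ⟨u, x, y, hu, hux, huy, hxy, hv_par⟩ := exists_parents_eq_triangle hv
  have hx : A.gen x ≤ A.gen u := by
    have : x ∈ A.parents v := by rw [hv_par]; simp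
    have := this.2; omega
  have hy : A.gen y ≤ A.gen u := by
    have : y ∈ A.parents v := by rw [hv_par]; simp
    have := this.2; omega
  refine (A.attach (A.gen u) (A.gen_pos u) u x y rfl hx hy (ne_of_adj hxy) hux huy
    hxy).unique ⟨hu.symm, ?_⟩ ⟨by omega, ?_⟩
  · rw [setOf_adj_gen_le_eq_parents hu.symm, hv_par]
  · rw [setOf_adj_gen_le_eq_parents (by omega), ← hpar, hv_par]

lemma ncard_setOf_gen_eq_one : {v : A.Vert | A.gen v = 1}.ncard = 3 :=
  Set.ncard_eq_three.2 A.U1_card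

lemma finite_setOf_gen_eq_one : {v : A.Vert | A.gen v = 1}.Finite :=
  Set.finite_of_ncard_ne_zero (by rw [ncard_setOf_gen_eq_one]; norm_num)

lemma setOf_gen_eq_one_eq {u x y : A.Vert} (hu : A.gen u = 1) (hx : A.gen x = 1)
    (hy : A.gen y = 1) (hux : u ≠ x) (huy : u ≠ y) (hxy : x ≠ y) :
    {v | A.gen v = 1} = {u, x, y} := by
  refine (Set.eq_of_subset_of_ncard_le ?_ ?_ finite_setOf_gen_eq_one).symm
  · rintro _ (rfl | rfl | rfl | _) <;> assumption
  · rw [ncard_setOf_gen_eq_one, Set.ncard_eq_three.2 ⟨u, x, y, hux, huy, hxy, rfl⟩]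

lemma exists_gen_eq_one_ne (x y : A.Vert) : ∃ r, A.gen r = 1 ∧ r ≠ x ∧ r ≠ y := by
  have hcard : ({x, y} : Set A.Vert).ncard < {v : A.Vert | A.gen v = 1}.ncard := by
    rw [ncard_setOf_gen_eq_one]
    exact (Set.ncard_insert_le x {y}).trans_lt (by rw [Set.ncard_singleton]; norm_num)
  obtain ⟨r, hr, hrxy⟩ := Set.exists_mem_notMem_of_ncard_lt_ncard hcard
  simp only [Set.mem_insert_iff, Set.mem_singleton_iff, not_or] at hrxy
  exact ⟨r, hr, hrxy⟩

lemma parents_of_gen_eq_two {v : A.Vert} (hv : A.gen v = 2) :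
    A.parents v = {t | A.gen t = 1} := by
  obtain ⟨u, x, y, hu, hux, huy, hxy, hpar⟩ := exists_parents_eq_triangle hv.ge
  have hgen : ∀ t ∈ A.parents v, A.gen t = 1 := fun t ht => by
    have := A.gen_pos t; have := ht.2; omega
  rw [hpar] at hgen ⊢
  exact (setOf_gen_eq_one_eq (hgen u (by simp)) (hgen x (by simp)) (hgen y (by simp))
    (ne_of_adj hux) (ne_of_adj huy) (ne_of_adj hxy)).symm

variable (A) in
lemma exists_gen_eq_two : ∃ v, A.gen v = 2 := by
  obtain ⟨a, b, c, hab, hac, hbc, h⟩ := A.U1_card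
  have hgen : ∀ t ∈ ({a, b, c} : Set A.Vert), A.gen t = 1 := by rw [← h]; exact fun _ => id
  have ha := hgen a (by simp)
  have hb := hgen b (by simp)
  have hc := hgen c (by simp)
  obtain ⟨v, hv, -⟩ := exists_parents_eq le_rfl (A.U1_complete a b ha hb hab)
    (A.U1_complete a c ha hc hac) (A.U1_complete b c hb hc hbc) ha.le hb.le hc.le (Or.inl ha)
  exact ⟨v, hv⟩

variable (A) in
noncomputable def apex : A.Vert := A.exists_gen_eq_two.choose

lemma gen_apex : A.gen A.apex = 2 := A.exists_gen_eq_two.choose_spec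

lemma eq_apex_of_gen_eq_two {v : A.Vert} (hv : A.gen v = 2) : v = A.apex :=
  eq_of_parents_eq hv.ge (hv.trans gen_apex.symm)
    ((parents_of_gen_eq_two hv).trans (parents_of_gen_eq_two gen_apex).symm)

lemma adj_apex {w : A.Vert} (hw : A.gen w = 1) : A.adj A.apex w := by
  have : w ∈ A.parents A.apex := by rw [parents_of_gen_eq_two gen_apex]; exact hw
  exact this.1

variable (A) in
open Classical in
noncomputable def copy (r v : A.Vert) : A.Vert :=
  if 2 ≤ A.gen v then
    haveI : Nonempty A.Vert := ⟨v⟩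
    Classical.epsilon fun w => A.gen w = A.gen v + 1 ∧
      A.parents w = Set.range fun t : A.parents v => copy r t
  else if v = r then A.apex else v
termination_by A.gen v
decreasing_by exact t.2.2

section copy

variable {r : A.Vert}

lemma copy_self (hr : A.gen r = 1) : A.copy r r = A.apex := by
  rw [copy, if_neg (by omega), if_pos rfl]

lemma copy_of_ne {v : A.Vert} (hv : A.gen v = 1) (hvr : v ≠ r) : A.copy r v = v := by
  rw [copy, if_neg (by omega), if_neg hvr]

lemma copy_of_two_le {v : A.Vert} (hv : 2 ≤ A.gen v) :
    A.copy r v = @Classical.epsilon _ ⟨v⟩ fun w =>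
      A.gen w = A.gen v + 1 ∧ A.parents w = A.copy r '' A.parents v := by
  rw [copy, if_pos hv, Set.image_eq_range]

lemma gen_copy_le_two {v : A.Vert} (hr : A.gen r = 1) (hv : A.gen v = 1) :
    A.gen (A.copy r v) ≤ 2 := by
  by_cases hvr : v = r
  · rw [hvr, copy_self hr, gen_apex]
  · rw [copy_of_ne hv hvr]; omega

lemma adj_copy_of_gen_eq_one {s t : A.Vert} (hr : A.gen r = 1) (hst : A.adj s t)
    (hs : A.gen s = 1) (ht : A.gen t = 1) : A.adj (A.copy r s) (A.copy r t) := by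
  by_cases hsr : s = r
  · subst hsr
    rw [copy_self hr, copy_of_ne ht (ne_of_adj hst).symm]
    exact adj_apex ht
  by_cases htr : t = r
  · subst htr
    rw [copy_self hr, copy_of_ne hs hsr]
    exact A.adj_symm _ _ (adj_apex hs)
  rw [copy_of_ne hs hsr, copy_of_ne ht htr]
  exact hst

lemma adj_copy_of_parents_copy {s t : A.Vert} (hr : A.gen r = 1) (hst : A.adj s t)
    (hs : 2 ≤ A.gen s → A.parents (A.copy r s) = A.copy r '' A.parents s)
    (ht : 2 ≤ A.gen t → A.parents (A.copy r t) = A.copy r '' A.parents t) :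
    A.adj (A.copy r s) (A.copy r t) := by
  rcases lt_trichotomy (A.gen s) (A.gen t) with h | h | h
  · have : A.copy r s ∈ A.parents (A.copy r t) := by
      rw [ht (by have := A.gen_pos s; omega)]
      exact ⟨s, ⟨A.adj_symm _ _ hst, h⟩, rfl⟩
    exact A.adj_symm _ _ this.1
  · have hs1 := A.adj_gen s t hst h
    exact adj_copy_of_gen_eq_one hr hst hs1 (h ▸ hs1)
  · have : A.copy r t ∈ A.parents (A.copy r s) := by
      rw [hs (by have := A.gen_pos t; omega)]
      exact ⟨t, ⟨hst, h⟩, rfl⟩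
    exact this.1

lemma copy_spec (hr : A.gen r = 1) {v : A.Vert} (hv : 2 ≤ A.gen v) :
    A.gen (A.copy r v) = A.gen v + 1 ∧ A.parents (A.copy r v) = A.copy r '' A.parents v := by
  induction hn : A.gen v using Nat.strong_induction_on generalizing v with
  | _ n IH =>
  have hgen : ∀ t ∈ A.parents v, A.gen (A.copy r t) ≤ n := fun t ht => by
    by_cases h2 : 2 ≤ A.gen t
    · rw [(IH _ (hn ▸ ht.2) h2 rfl).1]; have := ht.2; omega
    · have := gen_copy_le_two hr (show A.gen t = 1 by have := A.gen_pos t; omega); omega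
  have hadj : ∀ s ∈ A.parents v, ∀ t ∈ A.parents v, s ≠ t →
      A.adj (A.copy r s) (A.copy r t) := fun s hs t ht hst =>
    adj_copy_of_parents_copy hr (adj_of_mem_parents hs ht hst)
      (fun h2 => (IH _ (hn ▸ hs.2) h2 rfl).2) (fun h2 => (IH _ (hn ▸ ht.2) h2 rfl).2)
  obtain ⟨u, x, y, hu, hux, huy, hxy, hpar⟩ := exists_parents_eq_triangle hv
  have hmax : A.gen (A.copy r u) = n ∨ A.gen (A.copy r x) = n ∨ A.gen (A.copy r y) = n := by
    rcases (show n = 2 ∨ 3 ≤ n by omega) with rfl | hn3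
    -- the parents of `v` are the three corners, and `r` among them goes to the apex
    · have hr_mem : r ∈ A.parents v := by rw [parents_of_gen_eq_two hn]; exact hr
      rw [hpar] at hr_mem
      rcases hr_mem with rfl | rfl | rfl <;> simp [copy_self hr, gen_apex]
    · exact Or.inl ((IH _ (by omega) (by omega) rfl).1.trans (by omega))
  rw [hpar] at hgen hadj
  have hex : ∃ w, A.gen w = A.gen v + 1 ∧ A.parents w = A.copy r '' A.parents v := by
    rw [hpar, Set.image_insert_eq, Set.image_insert_eq, Set.image_singleton, hn]
    exact exists_parents_eq (by omega)
      (hadj _ (by simp) _ (by simp) (ne_of_adj hux))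
      (hadj _ (by simp) _ (by simp) (ne_of_adj huy))
      (hadj _ (by simp) _ (by simp) (ne_of_adj hxy))
      (hgen _ (by simp)) (hgen _ (by simp)) (hgen _ (by simp)) hmax
  rw [← hn, copy_of_two_le hv]
  exact Classical.epsilon_spec hex

lemma gen_copy_le (hr : A.gen r = 1) (v : A.Vert) : A.gen (A.copy r v) ≤ A.gen v + 1 := by
  by_cases hv : 2 ≤ A.gen v
  · exact (copy_spec hr hv).1.le
  · have hv1 : A.gen v = 1 := by have := A.gen_pos v; omega
    have := gen_copy_le_two hr hv1
    omega

lemma adj_copy (hr : A.gen r = 1) {s t : A.Vert} (hst : A.adj s t) :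
    A.adj (A.copy r s) (A.copy r t) :=
  adj_copy_of_parents_copy hr hst (fun h => (copy_spec hr h).2) (fun h => (copy_spec hr h).2)

lemma gen_eq_of_copy_eq (hr : A.gen r = 1) {s t : A.Vert} (h : A.copy r s = A.copy r t) :
    A.gen s = A.gen t := by
  have hcopy : ∀ v, (2 ≤ A.gen v ∧ A.gen (A.copy r v) = A.gen v + 1) ∨
      (A.gen v = 1 ∧ A.gen (A.copy r v) ≤ 2) := fun v => by
    by_cases hv : 2 ≤ A.gen v
    · exact Or.inl ⟨hv, (copy_spec hr hv).1⟩
    · have hv1 : A.gen v = 1 := by have := A.gen_pos v; omega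
      exact Or.inr ⟨hv1, gen_copy_le_two hr hv1⟩
  rcases hcopy s with hs | hs <;> rcases hcopy t with ht | ht <;> rw [h] at hs <;> omega

lemma copy_injective (hr : A.gen r = 1) : Function.Injective (A.copy r) := by
  intro s t h
  have hgen := gen_eq_of_copy_eq hr h
  induction hn : A.gen s using Nat.strong_induction_on generalizing s t with
  | _ n IH =>
  by_cases h2 : 2 ≤ n
  · have hinj : Set.InjOn (A.copy r) {v | A.gen v < n} := fun a _ b _ hab =>
      IH _ ‹_› hab (gen_eq_of_copy_eq hr hab) rfl
    refine eq_of_parents_eq (hn ▸ h2) hgen ((hinj.image_eq_image_iff ?_ ?_).1 ?_)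
    · exact fun a ha => show A.gen a < n by have := ha.2; omega
    · exact fun a ha => show A.gen a < n by have := ha.2; omega
    · rw [← (copy_spec hr (hn ▸ h2)).2, ← (copy_spec hr (hgen ▸ hn ▸ h2)).2, h]
  have hs : A.gen s = 1 := by have := A.gen_pos s; omega
  have ht : A.gen t = 1 := hgen ▸ hs
  have hapex : ∀ v, A.gen v = 1 → A.apex ≠ v := fun v hv h => by
    have := h ▸ gen_apex; omega
  by_cases hsr : s = r <;> by_cases htr : t = r
  · rw [hsr, htr]
  · rw [hsr, copy_self hr, copy_of_ne ht htr] at h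
    exact absurd h (hapex t ht)
  · rw [htr, copy_self hr, copy_of_ne hs hsr] at h
    exact absurd h.symm (hapex s hs)
  · rwa [copy_of_ne hs hsr, copy_of_ne ht htr] at h

lemma exists_copy_eq_of_parents_eq (hr : A.gen r = 1) {z u x y : A.Vert}
    (hu : A.gen u + 2 = A.gen z) (hx : A.gen x ≤ A.gen u) (hy : A.gen y ≤ A.gen u)
    (hux : A.adj u x) (huy : A.adj u y) (hxy : A.adj x y)
    (hpar : A.parents z = {A.copy r u, A.copy r x, A.copy r y}) :
    ∃ z', A.gen z' + 1 = A.gen z ∧ A.copy r z' = z := by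
  obtain ⟨z', hz', hpar'⟩ :=
    exists_parents_eq (A.gen_pos u) hux huy hxy le_rfl hx hy (Or.inl rfl)
  have hspec := copy_spec hr (show 2 ≤ A.gen z' by have := A.gen_pos u; omega)
  refine ⟨z', by omega, eq_of_parents_eq (by omega) (by omega) ?_⟩
  rw [hspec.2, hpar', hpar, Set.image_insert_eq, Set.image_insert_eq, Set.image_singleton]

end copy

lemma exists_copy_eq {z : A.Vert} (hz : 2 ≤ A.gen z) :
    ∃ r, A.gen r = 1 ∧ ∃ z', A.gen z' + 1 = A.gen z ∧ A.copy r z' = z := by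
  induction hn : A.gen z using Nat.strong_induction_on generalizing z with
  | _ n IH =>
  subst hn
  rcases (show A.gen z = 2 ∨ 3 ≤ A.gen z by omega) with hz2 | hz3
  · obtain ⟨r, hr, -⟩ := exists_gen_eq_one_ne z z
    exact ⟨r, hr, r, by omega, (copy_self hr).trans (eq_apex_of_gen_eq_two hz2).symm⟩
  obtain ⟨u, x, y, hu, hux, huy, hxy, hpar⟩ := exists_parents_eq_triangle hz
  have hparent : ∀ t ∈ A.parents z, t ≠ u → t ∈ A.parents u := fun t ht htu => by
    have hlt := ht.2
    rw [hpar] at ht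
    have hadj : A.adj u t := by rcases ht with rfl | rfl | rfl <;> tauto
    exact ⟨hadj, gen_lt_of_adj hadj (by omega) (by omega)⟩
  have hx := hparent x (by rw [hpar]; simp) (ne_of_adj hux).symm
  have hy := hparent y (by rw [hpar]; simp) (ne_of_adj huy).symm
  rcases (show A.gen u = 2 ∨ 3 ≤ A.gen u by omega) with hu2 | hu3
  -- `u` is the apex and `x`, `y` are corners: `z` lies in the copy of the third corner
  · obtain ⟨r, hr, hrx, hry⟩ := exists_gen_eq_one_ne x y
    have hx1 : A.gen x = 1 := by have := hx.2; have := A.gen_pos x; omega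
    have hy1 : A.gen y = 1 := by have := hy.2; have := A.gen_pos y; omega
    refine ⟨r, hr, exists_copy_eq_of_parents_eq hr (by omega) (by omega) (by omega)
      (A.U1_complete r x hr hx1 hrx) (A.U1_complete r y hr hy1 hry) hxy ?_⟩
    rw [hpar, copy_self hr, copy_of_ne hx1 hrx.symm, copy_of_ne hy1 hry.symm,
      ← eq_apex_of_gen_eq_two hu2]
  · obtain ⟨r, hr, u', hu', rfl⟩ := IH (A.gen u) (by omega) (by omega) rfl
    rw [(copy_spec hr (show 2 ≤ A.gen u' by omega)).2] at hx hy
    obtain ⟨x', hx', rfl⟩ := hx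
    obtain ⟨y', hy', rfl⟩ := hy
    have hx'y' : x' ≠ y' := by rintro rfl; exact ne_of_adj hxy rfl
    exact ⟨r, hr, exists_copy_eq_of_parents_eq hr (by omega) hx'.2.le hy'.2.le hx'.1 hy'.1
      (adj_of_mem_parents hx' hy' hx'y') hpar⟩

lemma exists_copy_eq_of_gen_le {k : ℕ} (hk : 1 ≤ k) {z : A.Vert} (hz : A.gen z ≤ k + 1) :
    ∃ r, A.gen r = 1 ∧ ∃ z', A.gen z' ≤ k ∧ A.copy r z' = z := by
  by_cases hz1 : A.gen z = 1
  · obtain ⟨r, hr, hrz, -⟩ := exists_gen_eq_one_ne z z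
    exact ⟨r, hr, z, by omega, copy_of_ne hz1 hrz.symm⟩
  · have hz2 : 2 ≤ A.gen z := by have := A.gen_pos z; omega
    obtain ⟨r, hr, z', hz', hcopy⟩ := exists_copy_eq hz2
    exact ⟨r, hr, z', by omega, hcopy⟩

variable (A) in
noncomputable def copyHom (k : ℕ) {r : A.Vert} (hr : A.gen r = 1) : A.G k →g A.G (k + 1) where
  toFun v := ⟨A.copy r v, (gen_copy_le hr v).trans (by have := v.2; omega)⟩
  map_rel' h := adj_copy hr h

lemma copyHom_injective (k : ℕ) {r : A.Vert} (hr : A.gen r = 1) :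
    Function.Injective (A.copyHom k hr) :=
  fun _ _ h => Subtype.ext (copy_injective hr (congrArg Subtype.val h))

lemma exists_copyHom_eq {k : ℕ} (hk : 1 ≤ k) (z : {v : A.Vert // A.gen v ≤ k + 1}) :
    ∃ (r : {v | A.gen v = 1}) (z' : {v : A.Vert // A.gen v ≤ k}), A.copyHom k r.2 z' = z := by
  obtain ⟨r, hr, z', hz', hcopy⟩ := exists_copy_eq_of_gen_le hk z.2
  exact ⟨⟨r, hr⟩, ⟨z', hz'⟩, Subtype.ext hcopy⟩

end ApollonianNetwork

theorem stmt15 (A : ApollonianNetwork) (k : ℕ) (hk : 1 ≤ k) :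
    porousExpDomNum (A.G (k + 1)) ≤ 3 * porousExpDomNum (A.G k) := by
  have : Finite {v : A.Vert | A.gen v = 1} := A.finite_setOf_gen_eq_one
  have h := porousExpDomNum_le_natCard_mul (fun r : {v | A.gen v = 1} => A.copyHom k r.2)
    (fun r => A.copyHom_injective k r.2) (A.exists_copyHom_eq hk)
  rwa [Nat.card_coe_set_eq, A.ncard_setOf_gen_eq_one] at h
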